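/- arXiv:1604.06219 — 3 statements merged into one kernel-verified Lean document; each statement's English description precedes it below -/
import Mathlib

section
/- Let M ⊂ ℝ^d be positively invariant for a control-affine system. An invariant control set C ⊂ M is closed relative to M provided that for every x ∈ ∂C ∩ M the reachable set O⁺(x) has nonempty interior. In particular, an invariant control set C is closed if for every x ∈ ∂C the set O⁺(x) has nonempty interior. -/
open MeasureTheory Set Topology

/-- A control-affine system `ẋ = f₀(x) + ∑ vᵢ(t) fᵢ(x)` on `ℝ^d` with Lipschitz
continuous vector fields and compact control range `V ⊆ ℝ^m`.  The (unique, global)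
solutions are bundled as the data `φ` together with their defining properties. -/
structure CAS (d m : ℕ) where
  /-- the drift vector field -/
  f0 : (Fin d → ℝ) → (Fin d → ℝ)
  /-- the control vector fields -/
  f : Fin m → (Fin d → ℝ) → (Fin d → ℝ)
  /-- the control range -/
  V : Set (Fin m → ℝ)
  lip0 : ∃ K, LipschitzWith K f0
  lip : ∀ i, ∃ K, LipschitzWith K (f i)
  V_compact : IsCompact V
  /-- the solution map: `φ x v t` is the solution at time `t` starting at `x` with control `v` -/
  φ : (Fin d → ℝ) → (ℝ → (Fin m → ℝ)) → ℝ → (Fin d → ℝ)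
  φ_init : ∀ x v, φ x v 0 = x
  φ_cont : ∀ x v, Continuous (φ x v)
  /-- solutions are (Carathéodory) solutions of the ODE -/
  φ_sol : ∀ (x : Fin d → ℝ) (v : ℝ → (Fin m → ℝ)), Measurable v → (∀ t, v t ∈ V) →
    ∀ t, 0 ≤ t →
      φ x v t = x + ∫ s in (0:ℝ)..t, (f0 (φ x v s) + ∑ i, v s i • f (i) (φ x v s))

namespace CAS

variable {d m : ℕ}

/-- the set of admissible controls -/
def ctrl (S : CAS d m) : Set (ℝ → (Fin m → ℝ)) :=
  {v | Measurable v ∧ ∀ t, v t ∈ S.V}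

/-- a control is piecewise constant if it has only finitely many discontinuities on
every bounded interval, i.e. it is constant between the members of a sequence of
switching times tending to infinity -/
def PiecewiseConst (v : ℝ → (Fin m → ℝ)) : Prop :=
  ∃ τ : ℕ → ℝ, τ 0 = 0 ∧ StrictMono τ ∧ Filter.Tendsto τ Filter.atTop Filter.atTop ∧
    ∀ n, ∀ t ∈ Ico (τ n) (τ (n + 1)), v t = v (τ n)

/-- the reachable set from `x` -/
def reach (S : CAS d m) (x : Fin d → ℝ) : Set (Fin d → ℝ) :=
  {y | ∃ v ∈ S.ctrl, ∃ t ≥ (0:ℝ), S.φ x v t = y}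

/-- the set reachable from `x` with piecewise constant controls -/
def reachPC (S : CAS d m) (x : Fin d → ℝ) : Set (Fin d → ℝ) :=
  {y | ∃ v ∈ S.ctrl, PiecewiseConst v ∧ ∃ t ≥ (0:ℝ), S.φ x v t = y}

/-- the reachable set from `x` up to time `T` -/
def reachLe (S : CAS d m) (T : ℝ) (x : Fin d → ℝ) : Set (Fin d → ℝ) :=
  {y | ∃ v ∈ S.ctrl, ∃ t ∈ Icc (0:ℝ) T, S.φ x v t = y}

/-- the controllable set to `x` up to time `T` -/
def contrLe (S : CAS d m) (T : ℝ) (x : Fin d → ℝ) : Set (Fin d → ℝ) :=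
  {y | ∃ v ∈ S.ctrl, ∃ t ∈ Icc (0:ℝ) T, S.φ y v t = x}

/-- positive invariance of a set -/
def posInv (S : CAS d m) (M : Set (Fin d → ℝ)) : Prop :=
  ∀ x ∈ M, ∀ v ∈ S.ctrl, ∀ t ≥ (0:ℝ), S.φ x v t ∈ M

/-- invariance of a set -/
def inv (S : CAS d m) (M : Set (Fin d → ℝ)) : Prop :=
  ∀ t ≥ (0:ℝ), {y | ∃ x ∈ M, ∃ v ∈ S.ctrl, S.φ x v t = y} = M

/-- the two defining properties (i) controlled invariance and (ii) approximate
reachability of a control set -/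
def controlSetProps (S : CAS d m) (D : Set (Fin d → ℝ)) : Prop :=
  (∀ x ∈ D, ∃ v ∈ S.ctrl, ∀ t ≥ (0:ℝ), S.φ x v t ∈ D) ∧
  (∀ x ∈ D, D ⊆ closure (S.reach x))

/-- a control set: a maximal nonempty set with the properties `controlSetProps` -/
def isControlSet (S : CAS d m) (D : Set (Fin d → ℝ)) : Prop :=
  D.Nonempty ∧ S.controlSetProps D ∧
  ∀ D', D ⊆ D' → S.controlSetProps D' → D' = D

/-- an invariant control set -/
def isInvControlSet (S : CAS d m) (C : Set (Fin d → ℝ)) : Prop :=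
  S.isControlSet C ∧ ∀ x ∈ C, closure C = closure (S.reach x)

/-- local accessibility at a point -/
def locAccAt (S : CAS d m) (x : Fin d → ℝ) : Prop :=
  ∀ T > (0:ℝ), ∀ N ∈ 𝓝 x,
    (interior (S.reachLe T x) ∩ N).Nonempty ∧ (interior (S.contrLe T x) ∩ N).Nonempty

/-- local accessibility on a set -/
def locAccOn (S : CAS d m) (M : Set (Fin d → ℝ)) : Prop :=
  ∀ x ∈ M, S.locAccAt x

/-- the domain of attraction of a set -/
def domAttr (S : CAS d m) (C : Set (Fin d → ℝ)) : Set (Fin d → ℝ) :=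
  {x | (closure (S.reach x) ∩ C).Nonempty}

/-- the strict domain of attraction of an invariant control set -/
def domAttrStrict (S : CAS d m) (C : Set (Fin d → ℝ)) : Set (Fin d → ℝ) :=
  {x | (closure (S.reach x) ∩ C).Nonempty ∧
    ∀ C', S.isInvControlSet C' → (closure (S.reach x) ∩ C').Nonempty → C' = C}

end CAS

/-!
Solutions of the integral equation are unique and depend continuously on the initial point
(Grönwall), so reachable sets concatenate and trajectories starting in `closure C` stay in
`closure C`. If `x ∈ frontier C ∩ M` and `O⁺(x)` has an interior point, that point lies in
`closure C`, so the open set `interior O⁺(x)` meets `C` in some `c`, and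
`closure C = closure O⁺(c) ⊆ closure O⁺(x)`. Hence `closure C ∩ M` has both defining properties
of a control set, and maximality of `C` forces `closure C ∩ M = C`.
-/

open scoped NNReal

theorem le_mul_exp_of_le_add_mul_integral {g : ℝ → ℝ} (hg : Continuous g) {a K T : ℝ}
    (hK : 0 ≤ K) (h : ∀ t ∈ Icc 0 T, g t ≤ a + K * ∫ s in (0 : ℝ)..t, g s) :
    ∀ t ∈ Icc 0 T, g t ≤ a * Real.exp (K * t) := by
  set G : ℝ → ℝ := fun t => a + K * ∫ s in (0 : ℝ)..t, g s
  have hG : ∀ t, HasDerivAt G (K * g t) t := fun t =>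
    ((intervalIntegral.integral_hasDerivAt_right (hg.intervalIntegrable 0 t)
      hg.stronglyMeasurable.stronglyMeasurableAtFilter hg.continuousAt).const_mul K).const_add a
  have hGc : Continuous G := continuous_iff_continuousAt.2 fun t => (hG t).continuousAt
  have hbound : ∀ t ∈ Icc 0 T, G t ≤ gronwallBound a K 0 (t - 0) :=
    le_gronwallBound_of_liminf_deriv_right_le hGc.continuousOn
      (fun t _ _ hr => (hG t).hasDerivWithinAt.liminf_right_slope_le hr) (by simp [G])
      (fun t ht => by simpa using mul_le_mul_of_nonneg_left (h t (Ico_subset_Icc_self ht)) hK)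
  intro t ht
  simpa [gronwallBound_ε0] using (h t ht).trans (hbound t ht)

theorem add_integral_comp_add_left_of_eq {E : Type*} [NormedAddCommGroup E] [NormedSpace ℝ E]
    {u g : ℝ → E} {a t : ℝ} (hga : IntervalIntegrable g volume 0 a)
    (hgat : IntervalIntegrable g volume 0 (a + t))
    (ha : u a = u 0 + ∫ s in (0 : ℝ)..a, g s)
    (hat : u (a + t) = u 0 + ∫ s in (0 : ℝ)..(a + t), g s) :
    u (a + t) = u a + ∫ s in (0 : ℝ)..t, g (a + s) := by
  rw [intervalIntegral.integral_comp_add_left g a, add_zero,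
    ← intervalIntegral.integral_interval_sub_left hgat hga, ha, hat]
  abel

namespace CAS

variable {d m : ℕ} (S : CAS d m)

def vectorField (w : Fin m → ℝ) (y : Fin d → ℝ) : Fin d → ℝ :=
  S.f0 y + ∑ i, w i • S.f i y

theorem continuous_vectorField :
    Continuous fun p : (Fin m → ℝ) × (Fin d → ℝ) => S.vectorField p.1 p.2 := by
  have h₀ : Continuous S.f0 := S.lip0.choose_spec.continuous
  have h : ∀ i, Continuous (S.f i) := fun i => (S.lip i).choose_spec.continuous
  unfold vectorField
  fun_prop

theorem exists_lipschitzWith_vectorField :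
    ∃ K : ℝ≥0, ∀ w ∈ S.V, LipschitzWith K (S.vectorField w) := by
  obtain ⟨K₀, h₀⟩ := S.lip0
  choose K hK using S.lip
  obtain ⟨R, hR⟩ := S.V_compact.isBounded.exists_norm_le
  refine ⟨K₀ + ∑ i, R.toNNReal * K i, fun w hw => h₀.add (LipschitzWith.of_dist_le_mul ?_)⟩
  intro y z
  push_cast
  rw [Finset.sum_mul]
  refine dist_sum_sum_le_of_le _ fun i _ => ?_
  calc dist (w i • S.f i y) (w i • S.f i z) ≤ ‖w i‖ * dist (S.f i y) (S.f i z) :=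
        dist_smul_le _ _ _
    _ ≤ R.toNNReal * (K i * dist y z) := by
        gcongr
        · exact ((norm_le_pi_norm w i).trans (hR w hw)).trans (Real.le_coe_toNNReal R)
        · exact (hK i).dist_le_mul y z
    _ = R.toNNReal * K i * dist y z := by ring

variable {S}

theorem intervalIntegrable_vectorField {v : ℝ → Fin m → ℝ} (hv : v ∈ S.ctrl)
    {u : ℝ → Fin d → ℝ} (hu : Continuous u) (a b : ℝ) :
    IntervalIntegrable (fun s => S.vectorField (v s) (u s)) volume a b := by
  obtain ⟨B, hB⟩ := (S.V_compact.prod (isCompact_uIcc.image hu)).exists_bound_of_continuousOn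
    S.continuous_vectorField.continuousOn
  rw [intervalIntegrable_iff]
  refine Measure.integrableOn_of_bounded measure_Ioc_lt_top.ne
    (S.continuous_vectorField.measurable.comp (hv.1.prodMk hu.measurable)).aestronglyMeasurable
    (M := B) ((ae_restrict_iff' measurableSet_uIoc).2 (ae_of_all _ fun s hs => ?_))
  exact hB (v s, u s) ⟨hv.2 s, mem_image_of_mem u (uIoc_subset_uIcc hs)⟩

variable (S) in
def IsSolOn (v : ℝ → Fin m → ℝ) (u : ℝ → Fin d → ℝ) (T : ℝ) : Prop :=
  ∀ t ∈ Icc 0 T, u t = u 0 + ∫ s in (0 : ℝ)..t, S.vectorField (v s) (u s)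

theorem isSolOn_φ {v : ℝ → Fin m → ℝ} (hv : v ∈ S.ctrl) (x : Fin d → ℝ) (T : ℝ) :
    S.IsSolOn v (S.φ x v) T := fun t ht => by
  rw [S.φ_init]
  exact S.φ_sol x v hv.1 hv.2 t ht.1

theorem IsSolOn.congr_control {v w : ℝ → Fin m → ℝ} {u : ℝ → Fin d → ℝ} {T : ℝ}
    (h : S.IsSolOn v u T) (hvw : ∀ s ∈ Ioc 0 T, v s = w s) : S.IsSolOn w u T := by
  intro t ht
  rw [h t ht]
  congr 1
  refine intervalIntegral.integral_congr_ae (ae_of_all _ fun s hs => ?_)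
  rw [uIoc_of_le ht.1] at hs
  rw [hvw s ⟨hs.1, hs.2.trans ht.2⟩]

theorem IsSolOn.comp_add_left {w : ℝ → Fin m → ℝ} (hw : w ∈ S.ctrl) {u : ℝ → Fin d → ℝ}
    (hu : Continuous u) {a T : ℝ} (ha : 0 ≤ a) (h : S.IsSolOn w u (a + T)) :
    S.IsSolOn (fun s => w (a + s)) (fun s => u (a + s)) T := by
  intro t ht
  simp only [add_zero]
  exact add_integral_comp_add_left_of_eq (intervalIntegrable_vectorField hw hu _ _)
    (intervalIntegrable_vectorField hw hu _ _) (h a ⟨ha, by linarith [ht.1, ht.2]⟩)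
    (h (a + t) ⟨by linarith [ht.1], by linarith [ht.2]⟩)

theorem norm_sub_le_of_isSolOn {K : ℝ≥0} (hK : ∀ w ∈ S.V, LipschitzWith K (S.vectorField w))
    {v : ℝ → Fin m → ℝ} (hv : v ∈ S.ctrl) {u₁ u₂ : ℝ → Fin d → ℝ} (hu₁ : Continuous u₁)
    (hu₂ : Continuous u₂) {T : ℝ} (h₁ : S.IsSolOn v u₁ T) (h₂ : S.IsSolOn v u₂ T) :
    ∀ t ∈ Icc 0 T, ‖u₁ t - u₂ t‖ ≤ ‖u₁ 0 - u₂ 0‖ * Real.exp (K * t) := by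
  refine le_mul_exp_of_le_add_mul_integral (g := fun t => ‖u₁ t - u₂ t‖) (hu₁.sub hu₂).norm
    K.coe_nonneg fun t ht => ?_
  have hI₁ := intervalIntegrable_vectorField hv hu₁ 0 t
  have hI₂ := intervalIntegrable_vectorField hv hu₂ 0 t
  have hsub : u₁ t - u₂ t = (u₁ 0 - u₂ 0) +
      ∫ s in (0 : ℝ)..t, (S.vectorField (v s) (u₁ s) - S.vectorField (v s) (u₂ s)) := by
    rw [intervalIntegral.integral_sub hI₁ hI₂, h₁ t ht, h₂ t ht]
    abel
  rw [hsub, ← intervalIntegral.integral_const_mul]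
  refine (norm_add_le _ _).trans (add_le_add_right ?_ _)
  refine (intervalIntegral.norm_integral_le_integral_norm ht.1).trans
    (intervalIntegral.integral_mono_on ht.1 (hI₁.sub hI₂).norm
      (((hu₁.sub hu₂).norm.const_smul (K : ℝ)).intervalIntegrable 0 t) fun s _ => ?_)
  rw [← dist_eq_norm, ← dist_eq_norm]
  exact (hK _ (hv.2 s)).dist_le_mul _ _

theorem eqOn_φ_of_isSolOn {v : ℝ → Fin m → ℝ} (hv : v ∈ S.ctrl) {u : ℝ → Fin d → ℝ}
    (hu : Continuous u) {T : ℝ} (h : S.IsSolOn v u T) : EqOn u (S.φ (u 0) v) (Icc 0 T) := by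
  obtain ⟨K, hK⟩ := S.exists_lipschitzWith_vectorField
  intro t ht
  have := norm_sub_le_of_isSolOn hK hv hu (S.φ_cont (u 0) v) h (isSolOn_φ hv (u 0) T) t ht
  rwa [S.φ_init, sub_self, norm_zero, zero_mul, norm_le_zero_iff, sub_eq_zero] at this

theorem continuous_φ_initial {v : ℝ → Fin m → ℝ} (hv : v ∈ S.ctrl) {t : ℝ} (ht : 0 ≤ t) :
    Continuous fun x => S.φ x v t := by
  obtain ⟨K, hK⟩ := S.exists_lipschitzWith_vectorField
  refine (LipschitzWith.of_dist_le' (K := Real.exp (K * t)) fun x y => ?_).continuous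
  rw [dist_eq_norm, dist_eq_norm, mul_comm]
  simpa only [S.φ_init] using norm_sub_le_of_isSolOn hK hv (S.φ_cont x v) (S.φ_cont y v)
    (isSolOn_φ hv x t) (isSolOn_φ hv y t) t ⟨ht, le_rfl⟩

noncomputable def concatControl (v₁ : ℝ → Fin m → ℝ) (τ : ℝ) (v₂ : ℝ → Fin m → ℝ) :
    ℝ → Fin m → ℝ :=
  fun t => if t ≤ τ then v₁ t else v₂ (t - τ)

theorem concatControl_mem_ctrl {v₁ v₂ : ℝ → Fin m → ℝ} (hv₁ : v₁ ∈ S.ctrl) (hv₂ : v₂ ∈ S.ctrl)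
    (τ : ℝ) : concatControl v₁ τ v₂ ∈ S.ctrl := by
  refine ⟨Measurable.ite measurableSet_Iic hv₁.1 (hv₂.1.comp (measurable_sub_const τ)),
    fun t => ?_⟩
  unfold concatControl
  split_ifs
  exacts [hv₁.2 t, hv₂.2 (t - τ)]

theorem reach_subset_of_mem_reach {x y : Fin d → ℝ} (hy : y ∈ S.reach x) :
    S.reach y ⊆ S.reach x := by
  obtain ⟨v₁, hv₁, τ, hτ, rfl⟩ := hy
  rintro z ⟨v₂, hv₂, t, ht, rfl⟩
  set w := concatControl v₁ τ v₂
  have hw : w ∈ S.ctrl := concatControl_mem_ctrl hv₁ hv₂ τ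
  have hτ_eq : S.φ x w τ = S.φ x v₁ τ := by
    have := eqOn_φ_of_isSolOn hv₁ (S.φ_cont x w)
      ((isSolOn_φ hw x τ).congr_control fun s hs => if_pos hs.2) ⟨hτ, le_rfl⟩
    rwa [S.φ_init] at this
  have hshift : S.IsSolOn v₂ (fun s => S.φ x w (τ + s)) t :=
    ((isSolOn_φ hw x (τ + t)).comp_add_left hw (S.φ_cont x w) hτ).congr_control fun s hs => by
      simp only [w, concatControl, if_neg (show ¬τ + s ≤ τ by linarith [hs.1]),
        add_sub_cancel_left]
  refine ⟨w, hw, τ + t, by linarith, ?_⟩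
  have := eqOn_φ_of_isSolOn hv₂ ((S.φ_cont x w).comp (continuous_const_add τ)) hshift
    ⟨ht, le_rfl⟩
  simpa only [Function.comp_apply, add_zero, hτ_eq] using this

theorem reach_subset_closure_of_isInvControlSet {C : Set (Fin d → ℝ)}
    (hC : S.isInvControlSet C) {x : Fin d → ℝ} (hx : x ∈ closure C) :
    S.reach x ⊆ closure C := by
  rintro _ ⟨v, hv, t, ht, rfl⟩
  have hmaps : MapsTo (fun c => S.φ c v t) C (closure C) := fun c hc =>
    hC.2 c hc ▸ subset_closure ⟨v, hv, t, ht, rfl⟩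
  simpa only [closure_closure] using map_mem_closure (continuous_φ_initial hv ht) hx hmaps

theorem closure_subset_closure_reach_of_isInvControlSet {C : Set (Fin d → ℝ)}
    (hC : S.isInvControlSet C) {x : Fin d → ℝ} (hx : x ∈ closure C)
    (hint : (interior (S.reach x)).Nonempty) : closure C ⊆ closure (S.reach x) := by
  obtain ⟨y, hy⟩ := hint
  obtain ⟨c, hc_int, hcC⟩ := mem_closure_iff.mp
    (reach_subset_closure_of_isInvControlSet hC hx (interior_subset hy)) _ isOpen_interior hy
  rw [hC.2 c hcC]
  exact closure_mono (reach_subset_of_mem_reach (interior_subset hc_int))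

theorem closure_inter_eq_of_isInvControlSet {M C : Set (Fin d → ℝ)} (hM : S.posInv M)
    (hC : S.isInvControlSet C) (hCM : C ⊆ M)
    (hfr : ∀ x ∈ frontier C ∩ M, (interior (S.reach x)).Nonempty) : closure C ∩ M = C := by
  obtain ⟨x₀, hx₀⟩ := hC.1.1
  obtain ⟨v₀, hv₀, -⟩ := hC.1.2.1.1 x₀ hx₀
  refine hC.1.2.2 _ (fun x hx => ⟨subset_closure hx, hCM hx⟩) ⟨fun x hx => ?_, fun x hx => ?_⟩
  · exact ⟨v₀, hv₀, fun t ht => ⟨reach_subset_closure_of_isInvControlSet hC hx.1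
      ⟨v₀, hv₀, t, ht, rfl⟩, hM x hx.2 v₀ hv₀ t ht⟩⟩
  · refine inter_subset_left.trans ?_
    by_cases hxC : x ∈ C
    · exact (hC.2 x hxC).subset
    · exact closure_subset_closure_reach_of_isInvControlSet hC hx.1
        (hfr x ⟨⟨hx.1, fun h => hxC (interior_subset h)⟩, hx.2⟩)

end CAS

/-- Let `M` be positively invariant.  An invariant control set
`C ⊆ M` is closed relative to `M` provided the reachable set of every point of
`∂C ∩ M` has nonempty interior; in particular an invariant control set is closed if
the reachable set of every boundary point has nonempty interior. -/
theorem stmt2 {d m : ℕ} (S : CAS d m) (M C : Set (Fin d → ℝ))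
    (hM : S.posInv M) (hC : S.isInvControlSet C) (hCM : C ⊆ M) :
    ((∀ x ∈ frontier C ∩ M, (interior (S.reach x)).Nonempty) → closure C ∩ M = C) ∧
    ((∀ x ∈ frontier C, (interior (S.reach x)).Nonempty) → IsClosed C) := by
  refine ⟨S.closure_inter_eq_of_isInvControlSet hM hC hCM, fun hfr => ?_⟩
  have hcl := S.closure_inter_eq_of_isInvControlSet (M := univ) (fun _ _ _ _ _ _ => trivial) hC
    (subset_univ C) fun x hx => hfr x hx.1
  rw [inter_univ] at hcl
  exact hcl ▸ isClosed_closure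
end

section
/- If a control-affine system is locally accessible on a positively invariant set M ⊂ ℝ^d, then there are at most countably many invariant control sets in M. -/
open MeasureTheory Set Topology

/-!
Local accessibility makes the reachable set of every point of an invariant control set `C ⊆ M`
have nonempty interior. If the reachable sets of `x ∈ C` and `x' ∈ C'` share an interior point,
that open set meets `C'` in a point reachable from `x`, so concatenating controls gives
`closure C' ⊆ closure C`, and symmetrically; then `C ∪ C'` is again a control set and maximality
forces `C = C'`. Hence the invariant control sets index disjoint nonempty open subsets of the
separable space `ℝ^d`, and there are countably many. Concatenation needs uniqueness of the
Carathéodory solutions, which follows from the Lipschitz bounds by Grönwall's inequality.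
-/

open intervalIntegral in
theorem eqOn_zero_of_le_mul_integral {δ : ℝ → ℝ} {L a b : ℝ} (hδ : Continuous δ)
    (hδ₀ : ∀ r ∈ Icc a b, 0 ≤ δ r) (hle : ∀ r ∈ Icc a b, δ r ≤ L * ∫ σ in a..r, δ σ) :
    EqOn δ 0 (Icc a b) := by
  have hderiv : ∀ r, HasDerivAt (fun r => ∫ σ in a..r, δ σ) (δ r) r := fun r =>
    integral_hasDerivAt_right (hδ.intervalIntegrable a r)
      (hδ.stronglyMeasurableAtFilter _ _) hδ.continuousAt
  have hint₀ : ∀ r ∈ Icc a b, 0 ≤ ∫ σ in a..r, δ σ := fun r hr =>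
    integral_nonneg hr.1 fun σ hσ => hδ₀ σ ⟨hσ.1, hσ.2.trans hr.2⟩
  have hint : EqOn (fun r => ∫ σ in a..r, δ σ) 0 (Icc a b) := by
    refine eq_zero_of_abs_deriv_le_mul_abs_self_of_eq_zero_right (K := L)
      (fun r _ => (hderiv r).continuousAt.continuousWithinAt)
      (fun r _ => (hderiv r).hasDerivWithinAt) integral_same fun r hr => ?_
    have hr' := Ico_subset_Icc_self hr
    rw [Real.norm_of_nonneg (hδ₀ r hr'), Real.norm_of_nonneg (hint₀ r hr')]
    exact hle r hr'
  intro r hr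
  refine le_antisymm ?_ (hδ₀ r hr)
  simpa [hint hr] using hle r hr

theorem eqOn_of_integral_eq_of_lipschitz {E : Type*} [NormedAddCommGroup E] [NormedSpace ℝ E]
    {G : ℝ → E → E} {L : ℝ} (hG : ∀ σ p q, ‖G σ p - G σ q‖ ≤ L * ‖p - q‖)
    {y z : ℝ → E} (hy : Continuous y) (hz : Continuous z) {a b : ℝ}
    (hyi : IntervalIntegrable (fun σ => G σ (y σ)) volume a b)
    (hzi : IntervalIntegrable (fun σ => G σ (z σ)) volume a b)
    (hy_eq : ∀ r ∈ Icc a b, y r = y a + ∫ σ in a..r, G σ (y σ))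
    (hz_eq : ∀ r ∈ Icc a b, z r = z a + ∫ σ in a..r, G σ (z σ))
    (ha : y a = z a) : EqOn y z (Icc a b) := by
  have hδ : Continuous fun r => ‖y r - z r‖ := (hy.sub hz).norm
  have hle : ∀ r ∈ Icc a b, ‖y r - z r‖ ≤ L * ∫ σ in a..r, ‖y σ - z σ‖ := by
    intro r hr
    have hsub : uIcc a r ⊆ uIcc a b :=
      uIcc_subset_uIcc left_mem_uIcc (by rw [uIcc_of_le (hr.1.trans hr.2)]; exact hr)
    have hyi' := hyi.mono_set hsub
    have hzi' := hzi.mono_set hsub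
    have hdiff : y r - z r = ∫ σ in a..r, (G σ (y σ) - G σ (z σ)) := by
      rw [intervalIntegral.integral_sub hyi' hzi', hy_eq r hr, hz_eq r hr, ha]
      abel
    calc ‖y r - z r‖ ≤ ∫ σ in a..r, ‖G σ (y σ) - G σ (z σ)‖ :=
          hdiff ▸ intervalIntegral.norm_integral_le_integral_norm hr.1
      _ ≤ ∫ σ in a..r, L * ‖y σ - z σ‖ :=
          intervalIntegral.integral_mono_on hr.1 (hyi'.sub hzi').norm
            ((hδ.const_smul L).intervalIntegrable a r) fun σ _ => hG σ (y σ) (z σ)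
      _ = L * ∫ σ in a..r, ‖y σ - z σ‖ := intervalIntegral.integral_const_mul L _
  intro r hr
  exact sub_eq_zero.mp <| norm_eq_zero.mp <|
    eqOn_zero_of_le_mul_integral hδ (fun _ _ => norm_nonneg _) hle hr

namespace CAS

variable {d m : ℕ} (S : CAS d m)

def rhs (w : Fin m → ℝ) (p : Fin d → ℝ) : Fin d → ℝ :=
  S.f0 p + ∑ i, w i • S.f i p

theorem continuous_rhs : Continuous fun z : (Fin m → ℝ) × (Fin d → ℝ) => S.rhs z.1 z.2 := by
  have hf0 : Continuous S.f0 := S.lip0.choose_spec.continuous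
  have hf : ∀ i, Continuous (S.f i) := fun i => (S.lip i).choose_spec.continuous
  unfold rhs
  fun_prop

theorem exists_lipschitz_rhs :
    ∃ L : ℝ, ∀ w ∈ S.V, ∀ p q, ‖S.rhs w p - S.rhs w q‖ ≤ L * ‖p - q‖ := by
  obtain ⟨B, hB⟩ := S.V_compact.isBounded.exists_norm_le
  obtain ⟨K0, hK0⟩ := S.lip0
  choose K hK using S.lip
  refine ⟨K0 + B * ∑ i, (K i : ℝ), fun w hw p q => ?_⟩
  have hcoord : ∀ i, ‖w i‖ ≤ B := fun i => (norm_le_pi_norm w i).trans (hB w hw)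
  have hsplit : S.rhs w p - S.rhs w q = (S.f0 p - S.f0 q) + ∑ i, w i • (S.f i p - S.f i q) := by
    simp only [rhs, smul_sub, Finset.sum_sub_distrib]
    abel
  calc ‖S.rhs w p - S.rhs w q‖
      ≤ ‖S.f0 p - S.f0 q‖ + ∑ i, ‖w i‖ * ‖S.f i p - S.f i q‖ := by
        rw [hsplit]
        refine (norm_add_le _ _).trans (add_le_add_right ((norm_sum_le _ _).trans ?_) _)
        simp only [norm_smul, le_refl]
    _ ≤ K0 * ‖p - q‖ + ∑ i, B * (K i * ‖p - q‖) := by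
        gcongr with i
        · exact hK0.norm_sub_le p q
        · exact (norm_nonneg _).trans (hcoord i)
        · exact hcoord i
        · exact (hK i).norm_sub_le p q
    _ = (K0 + B * ∑ i, (K i : ℝ)) * ‖p - q‖ := by
        rw [← Finset.mul_sum, ← Finset.sum_mul]
        ring

theorem intervalIntegrable_rhs {u : ℝ → Fin m → ℝ} (hu : u ∈ S.ctrl) {ψ : ℝ → Fin d → ℝ}
    (hψ : Continuous ψ) (a b : ℝ) :
    IntervalIntegrable (fun σ => S.rhs (u σ) (ψ σ)) volume a b := by
  have hK : IsCompact ((fun z => S.rhs z.1 z.2) '' (S.V ×ˢ (ψ '' uIcc a b))) :=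
    (S.V_compact.prod (isCompact_uIcc.image hψ)).image S.continuous_rhs
  obtain ⟨C, hC⟩ := hK.isBounded.exists_norm_le
  rw [intervalIntegrable_iff]
  refine Measure.integrableOn_of_bounded measure_Ioc_lt_top.ne
    (S.continuous_rhs.measurable.comp (hu.1.prodMk hψ.measurable)).aestronglyMeasurable
    (M := C) ?_
  filter_upwards [ae_restrict_mem measurableSet_uIoc] with σ hσ
  exact hC _ ⟨(u σ, ψ σ), ⟨hu.2 σ, σ, uIoc_subset_uIcc hσ, rfl⟩, rfl⟩

theorem φ_eq_add_integral {x : Fin d → ℝ} {u : ℝ → Fin m → ℝ} (hu : u ∈ S.ctrl) {a r : ℝ}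
    (ha : 0 ≤ a) (har : a ≤ r) :
    S.φ x u r = S.φ x u a + ∫ σ in a..r, S.rhs (u σ) (S.φ x u σ) := by
  have hsol : ∀ t, 0 ≤ t → S.φ x u t = x + ∫ σ in 0..t, S.rhs (u σ) (S.φ x u σ) :=
    S.φ_sol x u hu.1 hu.2
  have hint := S.intervalIntegrable_rhs hu (S.φ_cont x u)
  rw [hsol r (ha.trans har), hsol a ha,
    ← intervalIntegral.integral_add_adjacent_intervals (hint 0 a) (hint a r), add_assoc]

theorem eqOn_of_integral_eq {u : ℝ → Fin m → ℝ} (hu : u ∈ S.ctrl) {ψ₁ ψ₂ : ℝ → Fin d → ℝ}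
    (h₁ : Continuous ψ₁) (h₂ : Continuous ψ₂) {a b : ℝ}
    (hψ₁ : ∀ r ∈ Icc a b, ψ₁ r = ψ₁ a + ∫ σ in a..r, S.rhs (u σ) (ψ₁ σ))
    (hψ₂ : ∀ r ∈ Icc a b, ψ₂ r = ψ₂ a + ∫ σ in a..r, S.rhs (u σ) (ψ₂ σ))
    (ha : ψ₁ a = ψ₂ a) : EqOn ψ₁ ψ₂ (Icc a b) :=
  let ⟨_, hL⟩ := S.exists_lipschitz_rhs
  eqOn_of_integral_eq_of_lipschitz (fun σ => hL _ (hu.2 σ)) h₁ h₂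
    (S.intervalIntegrable_rhs hu h₁ a b) (S.intervalIntegrable_rhs hu h₂ a b) hψ₁ hψ₂ ha

theorem φ_congr_control {x : Fin d → ℝ} {u v : ℝ → Fin m → ℝ} (hu : u ∈ S.ctrl)
    (hv : v ∈ S.ctrl) {T : ℝ} (huv : EqOn u v (Ioc 0 T)) :
    EqOn (S.φ x u) (S.φ x v) (Icc 0 T) := by
  refine S.eqOn_of_integral_eq hu (S.φ_cont x u) (S.φ_cont x v)
    (fun r hr => S.φ_eq_add_integral hu le_rfl hr.1) (fun r hr => ?_) (by rw [S.φ_init, S.φ_init])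
  rw [S.φ_eq_add_integral hv le_rfl hr.1]
  congr 1
  refine intervalIntegral.integral_congr_ae (Filter.Eventually.of_forall fun σ hσ => ?_)
  rw [uIoc_of_le hr.1] at hσ
  rw [huv ⟨hσ.1, hσ.2.trans hr.2⟩]

theorem comp_add_const_mem_ctrl {u : ℝ → Fin m → ℝ} (hu : u ∈ S.ctrl) (s : ℝ) :
    (fun σ => u (σ + s)) ∈ S.ctrl :=
  ⟨hu.1.comp (measurable_add_const s), fun _ => hu.2 _⟩

theorem φ_add {x : Fin d → ℝ} {u : ℝ → Fin m → ℝ} (hu : u ∈ S.ctrl) {s t : ℝ}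
    (hs : 0 ≤ s) (ht : 0 ≤ t) :
    S.φ x u (t + s) = S.φ (S.φ x u s) (fun σ => u (σ + s)) t := by
  have hu' := S.comp_add_const_mem_ctrl hu s
  refine S.eqOn_of_integral_eq (a := 0) (b := t) hu' ((S.φ_cont x u).comp (continuous_add_const s))
    (S.φ_cont _ _) (fun r hr => ?_) (fun r hr => S.φ_eq_add_integral hu' le_rfl hr.1)
    (by simp only [Function.comp_apply, zero_add, S.φ_init]) ⟨ht, le_rfl⟩
  simp only [Function.comp_apply, zero_add]
  rw [S.φ_eq_add_integral hu hs (by linarith [hr.1]),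
    intervalIntegral.integral_comp_add_right (fun σ => S.rhs (u σ) (S.φ x u σ)), zero_add]

theorem reach_trans {x q y : Fin d → ℝ} (hq : q ∈ S.reach x) (hy : y ∈ S.reach q) :
    y ∈ S.reach x := by
  obtain ⟨v, hv, s, hs, rfl⟩ := hq
  obtain ⟨w, hw, t, ht, rfl⟩ := hy
  let u : ℝ → Fin m → ℝ := fun r => if r ≤ s then v r else w (r - s)
  have hu : u ∈ S.ctrl := by
    refine ⟨Measurable.ite measurableSet_Iic hv.1 (hw.1.comp (measurable_sub_const s)), fun r => ?_⟩
    dsimp only [u]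
    split_ifs
    exacts [hv.2 r, hw.2 _]
  have hbefore : S.φ x u s = S.φ x v s :=
    S.φ_congr_control hu hv (fun r hr => if_pos hr.2) ⟨hs, le_rfl⟩
  have hafter : S.φ (S.φ x u s) (fun σ => u (σ + s)) t = S.φ (S.φ x u s) w t :=
    S.φ_congr_control (S.comp_add_const_mem_ctrl hu s) hw
      (fun r hr => by simp [u, hr.1]) ⟨ht, le_rfl⟩
  exact ⟨u, hu, t + s, by linarith, by rw [S.φ_add hu hs ht, hafter, hbefore]⟩

variable {S}

theorem reachLe_subset_reach (T : ℝ) (x : Fin d → ℝ) : S.reachLe T x ⊆ S.reach x :=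
  fun _ ⟨v, hv, t, ht, h⟩ => ⟨v, hv, t, ht.1, h⟩

namespace isInvControlSet

variable {C C' : Set (Fin d → ℝ)}

theorem eq_of_closure_eq (hC : S.isInvControlSet C) (hC' : S.isInvControlSet C')
    (hcl : closure C = closure C') : C = C' := by
  have hreach : ∀ x ∈ C ∪ C', closure (S.reach x) = closure C := by
    rintro x (hx | hx)
    exacts [(hC.2 x hx).symm, hcl ▸ (hC'.2 x hx).symm]
  have hunion : S.controlSetProps (C ∪ C') := by
    refine ⟨?_, fun x hx => (hreach x hx).symm ▸ union_subset subset_closure (hcl ▸ subset_closure)⟩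
    rintro x (hx | hx)
    · obtain ⟨v, hv, hinv⟩ := hC.1.2.1.1 x hx
      exact ⟨v, hv, fun t ht => Or.inl (hinv t ht)⟩
    · obtain ⟨v, hv, hinv⟩ := hC'.1.2.1.1 x hx
      exact ⟨v, hv, fun t ht => Or.inr (hinv t ht)⟩
  exact (hC.1.2.2 _ subset_union_left hunion).symm.trans (hC'.1.2.2 _ subset_union_right hunion)

theorem closure_subset_of_mem_reach (hC : S.isInvControlSet C) (hC' : S.isInvControlSet C')
    {x q : Fin d → ℝ} (hx : x ∈ C) (hq : q ∈ C') (hxq : q ∈ S.reach x) :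
    closure C' ⊆ closure C := by
  rw [hC'.2 q hq, hC.2 x hx]
  exact closure_mono fun _ hy => S.reach_trans hxq hy

theorem closure_subset_of_inter_interior_reach (hC : S.isInvControlSet C)
    (hC' : S.isInvControlSet C') {x x' : Fin d → ℝ} (hx : x ∈ C) (hx' : x' ∈ C')
    (h : (interior (S.reach x) ∩ interior (S.reach x')).Nonempty) : closure C' ⊆ closure C := by
  obtain ⟨z, hz, hz'⟩ := h
  have hzC' : z ∈ closure C' := by
    rw [hC'.2 x' hx']
    exact subset_closure (interior_subset hz')
  obtain ⟨q, hq, hqC'⟩ := mem_closure_iff.mp hzC' _ isOpen_interior hz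
  exact hC.closure_subset_of_mem_reach hC' hx hqC' (interior_subset hq)

theorem eq_of_inter_interior_reach (hC : S.isInvControlSet C) (hC' : S.isInvControlSet C')
    {x x' : Fin d → ℝ} (hx : x ∈ C) (hx' : x' ∈ C')
    (h : (interior (S.reach x) ∩ interior (S.reach x')).Nonempty) : C = C' :=
  hC.eq_of_closure_eq hC' <|
    (hC'.closure_subset_of_inter_interior_reach hC hx' hx (inter_comm _ _ ▸ h)).antisymm
      (hC.closure_subset_of_inter_interior_reach hC' hx hx' h)

end isInvControlSet

end CAS

theorem stmt6_general {d m : ℕ} (S : CAS d m) (M : Set (Fin d → ℝ))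
    (hacc : S.locAccOn M) :
    {C : Set (Fin d → ℝ) | S.isInvControlSet C ∧ C ⊆ M}.Countable := by
  refine PairwiseDisjoint.countable_of_isOpen (s := fun C => ⋃ x ∈ C, interior (S.reach x)) ?_
    (fun _ _ => isOpen_biUnion fun _ _ => isOpen_interior) ?_
  · rintro C ⟨hC, -⟩ C' ⟨hC', -⟩ hne
    refine disjoint_left.mpr fun z hz hz' => hne ?_
    obtain ⟨x, hx, hzx⟩ := mem_iUnion₂.mp hz
    obtain ⟨x', hx', hzx'⟩ := mem_iUnion₂.mp hz'
    exact hC.eq_of_inter_interior_reach hC' hx hx' ⟨z, hzx, hzx'⟩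
  · rintro C ⟨hC, hCM⟩
    obtain ⟨x, hx⟩ := hC.1.1
    obtain ⟨z, hz, -⟩ := (hacc x (hCM hx) 1 one_pos univ Filter.univ_mem).1
    exact ⟨z, mem_biUnion hx (interior_mono (S.reachLe_subset_reach 1 x) hz)⟩

/-- If the system is locally accessible on a positively invariant
set `M`, then there are at most countably many invariant control sets in `M`. -/
theorem stmt6 {d m : ℕ} (S : CAS d m) (M : Set (Fin d → ℝ))
    (hM : S.posInv M) (hacc : S.locAccOn M) :
    {C : Set (Fin d → ℝ) | S.isInvControlSet C ∧ C ⊆ M}.Countable :=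
  stmt6_general S M hacc
end

section
/- Suppose for every x in a positively invariant set M there exists an invariant control set C ⊂ cl_M O⁺(x), and there are only finitely many invariant control sets in M. Then there exists a compact set K ⊂ M such that cl O⁺(x) ∩ K ≠ ∅ for every x ∈ M. -/
open MeasureTheory Set Topology

/-- Conversely, if every point of a positively invariant set `M`
can be approximately steered into some invariant control set contained in
`cl_M 𝒪⁺(x)` and there are only finitely many invariant control sets in `M`, then
there is a compact set `K ⊆ M` with `cl 𝒪⁺(x) ∩ K ≠ ∅` for every `x ∈ M`. -/
theorem stmt10 {d m : ℕ} (S : CAS d m) (M : Set (Fin d → ℝ))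
    (hM : S.posInv M)
    (hattr : ∀ x ∈ M, ∃ C, S.isInvControlSet C ∧ C ⊆ closure (S.reach x) ∩ M)
    (hfin : {C : Set (Fin d → ℝ) | S.isInvControlSet C ∧ C ⊆ M}.Finite) :
    ∃ K ⊆ M, IsCompact K ∧ ∀ x ∈ M, (closure (S.reach x) ∩ K).Nonempty := by
  classical
  set g : Set (Fin d → ℝ) → (Fin d → ℝ) :=
    fun C => if h : C.Nonempty then h.some else fun _ => 0 with hg
  have hgmem : ∀ C : Set (Fin d → ℝ), C.Nonempty → g C ∈ C := by
    intro C h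
    simp only [hg, dif_pos h]
    exact h.some_mem
  refine ⟨g '' {C : Set (Fin d → ℝ) | S.isInvControlSet C ∧ C ⊆ M}, ?_, ?_, ?_⟩
  · rintro y ⟨C, hC, rfl⟩
    exact hC.2 (hgmem C hC.1.1.1)
  · exact (hfin.image g).isCompact
  · intro x hx
    obtain ⟨C, hC, hsub⟩ := hattr x hx
    have hCM : C ⊆ M := fun y hy => (hsub hy).2
    have hCne : C.Nonempty := hC.1.1
    exact ⟨g C, (hsub (hgmem C hCne)).1, ⟨C, ⟨hC, hCM⟩, rfl⟩⟩
end
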